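/- arXiv:1310.6898 — 5 statements merged into one kernel-verified Lean document; each statement's English description precedes it below -/
import Mathlib

section
/- Let f : [0,1] → [0,1]² be any continuous surjection. Then there exists a closed set N ⊆ [0,1] with H¹(N) = 0 and H¹(f(N)) > 0. -/
/-!
The level sets in `[0,1]` of the first coordinate `x ↦ (f x)₀` are closed and pairwise
disjoint, so only countably many of them can have positive length; pick a
level `t ∈ [0,1]` whose fibre `N` is `H¹`-null. By surjectivity, `f '' N` contains the whole
vertical segment `{t} × [0,1]`, which has length `1`.
-/

open MeasureTheory Set

theorem MeasureTheory.Measure.exists_mem_measure_eq_zero_of_pairwise_disjoint {α ι : Type*}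
    [MeasurableSpace α] {μ : Measure α} [SFinite μ] {s : ι → Set α}
    (hs : ∀ i, MeasurableSet (s i)) (hd : Pairwise (Function.onFun Disjoint s))
    {T : Set ι} (hT : ¬ T.Countable) : ∃ i ∈ T, μ (s i) = 0 := by
  by_contra! h
  exact hT <| (Measure.countable_meas_pos_of_disjoint_iUnion hs hd).mono
    fun i hi => pos_iff_ne_zero.2 (h i hi)

theorem Real.not_countable_Icc {a b : ℝ} (hab : a < b) : ¬ (Icc a b).Countable := by
  intro h
  have := h.measure_zero volume
  rw [Real.volume_Icc, ENNReal.ofReal_eq_zero] at this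
  linarith

theorem isometry_vertical_line (t : ℝ) : Isometry fun y : ℝ => !₂[t, y] :=
  Isometry.of_dist_eq fun a b => by
    simp [EuclideanSpace.dist_eq, Fin.sum_univ_two, Real.dist_eq, ← Real.sqrt_sq_eq_abs]

theorem hausdorffMeasure_one_vertical_segment (t a b : ℝ) :
    μH[1] ((fun y : ℝ => !₂[t, y]) '' Icc a b) = ENNReal.ofReal (b - a) := by
  rw [(isometry_vertical_line t).hausdorffMeasure_image (Or.inl zero_le_one),
    hausdorffMeasure_real, Real.volume_Icc]

theorem vertical_segment_subset_image_fiber {f : ℝ → EuclideanSpace ℝ (Fin 2)} {s : Set ℝ}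
    (hsurj : {y : EuclideanSpace ℝ (Fin 2) | ∀ i, y i ∈ Icc (0 : ℝ) 1} ⊆ f '' s)
    {t : ℝ} (ht : t ∈ Icc 0 1) :
    (fun y : ℝ => !₂[t, y]) '' Icc 0 1 ⊆ f '' (s ∩ (fun x => f x 0) ⁻¹' {t}) := by
  rintro _ ⟨y, hy, rfl⟩
  obtain ⟨x, hx, hfx⟩ := hsurj (show ∀ i, !₂[t, y] i ∈ Icc (0 : ℝ) 1 from
    fun i => by fin_cases i <;> assumption)
  exact ⟨x, ⟨hx, by simp [hfx]⟩, hfx⟩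

/-- any continuous surjection from `[0,1]` onto the unit square `[0,1]²`
(with the Euclidean metric) maps some closed `H¹`-null subset of `[0,1]` to a set of
positive `H¹`-measure. -/
theorem statement_0
    (f : ℝ → EuclideanSpace ℝ (Fin 2))
    (hf : ContinuousOn f (Set.Icc 0 1))
    (hsurj : f '' Set.Icc 0 1 =
      {y : EuclideanSpace ℝ (Fin 2) | ∀ i, y i ∈ Set.Icc (0 : ℝ) 1}) :
    ∃ N, N ⊆ Set.Icc (0 : ℝ) 1 ∧ IsClosed N ∧ μH[1] N = 0 ∧ 0 < μH[1] (f '' N) := by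
  set fiber : ℝ → Set ℝ := fun t => Icc 0 1 ∩ (fun x => f x 0) ⁻¹' {t}
  have hclosed (t : ℝ) : IsClosed (fiber t) :=
    ((continuous_apply 0).comp_continuousOn ((PiLp.continuous_ofLp 2 _).comp_continuousOn hf))
      |>.preimage_isClosed_of_isClosed isClosed_Icc isClosed_singleton
  have hdisj : Pairwise (Function.onFun Disjoint fiber) := fun s t hst =>
    disjoint_left.2 fun _ hs ht => hst (hs.2.symm.trans ht.2)
  obtain ⟨t, ht, hnull⟩ := Measure.exists_mem_measure_eq_zero_of_pairwise_disjoint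
    (μ := volume) (fun t => (hclosed t).measurableSet) hdisj (Real.not_countable_Icc zero_lt_one)
  refine ⟨fiber t, inter_subset_left, hclosed t, by rwa [hausdorffMeasure_real], ?_⟩
  calc (0 : ENNReal) < ENNReal.ofReal (1 - 0) := by norm_num
    _ = μH[1] ((fun y : ℝ => !₂[t, y]) '' Icc 0 1) :=
      (hausdorffMeasure_one_vertical_segment t 0 1).symm
    _ ≤ μH[1] (f '' fiber t) := measure_mono (vertical_segment_subset_image_fiber hsurj.ge ht)
end

section
/- Let (Y, ν) be a measure space, let 𝒞 and 𝒜 be collections of subsets of Y, and let κ ≥ ℵ₀ be a cardinal such that: (a) Y ∈ 𝒜; (b) Y cannot be written as a union of κ-many sets in 𝒜 each of finite ν-measure; (c) for every family (C_j)_{j∈J} of sets in 𝒞 with |J| ≤ κ, both ⋃_{j∈J} C_j and Y \ ⋃_{j∈J} C_j belong to 𝒜; (d) whenever A ∈ 𝒜 has ν(A) = ∞, there exists C ∈ 𝒞 with C ⊆ A and 0 < ν(C) < ∞. Then there exists a family of pairwise disjoint sets in 𝒞, each of positive ν-measure, whose cardinality is strictly larger than κ. -/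
open MeasureTheory Set Filter Topology
open scoped NNReal ENNReal

universe u v

/-- A Hausdorff (gauge) function `h : [0,∞) → [0,∞]`: nondecreasing, right-continuous,
and positive on positive arguments. -/
structure IsHausdorffFunction (h : ℝ≥0 → ℝ≥0∞) : Prop where
  mono : Monotone h
  right_continuous : ∀ t : ℝ≥0, ContinuousWithinAt h (Set.Ici t) t
  pos : ∀ t : ℝ≥0, 0 < t → 0 < h t

/-- `h` is of finite order: `limsup_{t→0+} h(3t)/h(t) < ∞`. -/
def FiniteOrder (h : ℝ≥0 → ℝ≥0∞) : Prop :=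
  Filter.limsup (fun t : ℝ≥0 => h (3 * t) / h t) (nhdsWithin 0 (Set.Ioi 0)) < ⊤

/-- The Hausdorff (outer) measure built from the gauge `h`:
`H^h(E) = sup_{δ>0} inf { Σ h(diam Uᵢ) : E ⊆ ⋃ Uᵢ, diam Uᵢ ≤ δ }`. -/
noncomputable def hausdorffM {Z : Type*} [EMetricSpace Z] (h : ℝ≥0 → ℝ≥0∞) :
    MeasureTheory.OuterMeasure Z :=
  MeasureTheory.OuterMeasure.mkMetric (fun d => h d.toNNReal)

/-- A set `S` is σ-finite with respect to an outer measure `μ` if it is a countable union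
of Carathéodory-measurable sets of finite measure. -/
def SigmaFiniteSet {Z : Type*} (μ : MeasureTheory.OuterMeasure Z) (S : Set Z) : Prop :=
  ∃ A : ℕ → Set Z, (∀ n, μ.IsCaratheodory (A n) ∧ μ (A n) < ⊤) ∧ S = ⋃ n, A n

/-- A metric space has finite structural dimension if for every `ξ > 0` there are `N` and
`δ₀ > 0` such that every set of diameter `δ ≤ δ₀` can be covered by `N` sets of diameter
at most `ξ·δ`. -/
def FiniteStructuralDim (Z : Type*) [EMetricSpace Z] : Prop :=
  ∀ ξ : ℝ≥0, 0 < ξ → ∃ (N : ℕ) (δ₀ : ℝ≥0), 0 < δ₀ ∧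
    ∀ s : Set Z, EMetric.diam s ≤ δ₀ →
      ∃ U : Fin N → Set Z, s ⊆ ⋃ i, U i ∧ ∀ i, EMetric.diam (U i) ≤ ξ * EMetric.diam s

/-- Property (H) for a subspace `Y` of the complete separable metric space `Z`. -/
structure PropertyH {Z : Type*} [MetricSpace Z] (Y : Set Z) (h : ℝ≥0 → ℝ≥0∞) : Prop where
  complete : CompleteSpace Z
  separable : TopologicalSpace.SeparableSpace Z
  analytic : MeasureTheory.AnalyticSet Y
  hausdorff : IsHausdorffFunction h
  cont : Continuous h
  zero : h 0 = 0
  alt : FiniteOrder h ∨ FiniteStructuralDim Z ∨ ∀ x y z : Z, dist x z ≤ max (dist x y) (dist y z)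

/-- Property (H∞): property (H) together with non-σ-finiteness of `Y` w.r.t. `H^h`. -/
def PropertyHInf {Z : Type*} [MetricSpace Z] (Y : Set Z) (h : ℝ≥0 → ℝ≥0∞) : Prop :=
  PropertyH Y h ∧ ¬ SigmaFiniteSet (hausdorffM h) Y

/-- Property (Aκ): `X` is a union of κ-many measurable sets of finite measure, and
κ-many null sets always union to a null set. -/
def PropertyA {X : Type u} (μ : MeasureTheory.OuterMeasure X) (κ : Cardinal.{u}) : Prop :=
  (∃ (ι : Type u) (A : ι → Set X), Cardinal.mk ι = κ ∧ (⋃ i, A i) = Set.univ ∧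
      ∀ i, μ.IsCaratheodory (A i) ∧ μ (A i) < ⊤) ∧
  ∀ (ι : Type u) (A : ι → Set X), Cardinal.mk ι = κ → (∀ i, μ (A i) = 0) → μ (⋃ i, A i) = 0

/-- A set is perfect if it is closed and every open set meeting it meets it in an
infinite set. -/
def PerfectSet {X : Type*} [TopologicalSpace X] (C : Set X) : Prop :=
  IsClosed C ∧ ∀ O : Set X, IsOpen O → (O ∩ C).Nonempty → (O ∩ C).Infinite

/-- The gauge `d ↦ d^s`. -/
noncomputable def sGauge (s : ℝ≥0) : ℝ≥0 → ℝ≥0∞ := fun d => (d : ℝ≥0∞) ^ (s : ℝ)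

/-- Hausdorff–Besicovitch dimension: the supremum of all `s ≥ 0` with `H^{d^s}(E) > 0`. -/
noncomputable def hDim {Z : Type*} [EMetricSpace Z] (E : Set Z) : ℝ≥0∞ :=
  ⨆ (s : ℝ≥0) (_ : 0 < hausdorffM (sGauge s) E), (s : ℝ≥0∞)

/-!
Take, by Zorn's lemma, a maximal disjoint family `D` of sets in `𝒞` of positive finite
measure. If `#D ≤ κ`, the complement `B` of `⋃₀ D` lies in `𝒜`, and it has finite measure:
otherwise (d) yields a set of `𝒞` inside `B` that could be added to `D`. Then `B` together
with the members of `D` is a cover of `Y` by at most `κ + 1 = κ` sets of `𝒜` of finite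
measure, which (b) forbids.
-/

open Set

theorem exists_maximal_pairwise_subset {α : Type*} (S : Set α) (r : α → α → Prop) :
    ∃ D, Maximal (fun E => E ⊆ S ∧ E.Pairwise r) D :=
  zorn_subset _ fun c hcS hc =>
    ⟨⋃₀ c, ⟨sUnion_subset fun _ hE => (hcS hE).1, hc.pairwise_sUnion.2 fun _ hE => (hcS hE).2⟩,
      fun _ => subset_sUnion_of_mem⟩

theorem eq_empty_of_maximal_pairwiseDisjoint {α : Type*} {S D : Set (Set α)} {C : Set α}
    (hD : Maximal (fun E => E ⊆ S ∧ E.Pairwise Disjoint) D) (hCS : C ∈ S)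
    (hCD : Disjoint C (⋃₀ D)) : C = ∅ := by
  have hdisj : ∀ E ∈ D, Disjoint C E := fun E hE =>
    hCD.mono_right (subset_sUnion_of_mem hE)
  have hmem : C ∈ D :=
    hD.mem_of_prop_insert ⟨insert_subset hCS hD.1.1,
      hD.1.2.insert fun E hE _ => ⟨hdisj E hE, (hdisj E hE).symm⟩⟩
  simpa using hdisj C hmem

theorem Cardinal.mk_option_le {ι : Type*} {κ : Cardinal} (hκ : Cardinal.aleph0 ≤ κ)
    (hι : Cardinal.mk ι ≤ κ) : Cardinal.mk (Option ι) ≤ κ := by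
  rw [Cardinal.mk_option]
  exact Cardinal.add_le_of_le hκ hι (Cardinal.one_le_aleph0.trans hκ)

theorem statement_2_general {Y : Type u} (ν : MeasureTheory.OuterMeasure Y)
    (𝒞 𝒜 : Set (Set Y)) (κ : Cardinal.{u}) (hκ : Cardinal.aleph0 ≤ κ)
    (hb : ¬ ∃ (ι : Type u) (A : ι → Set Y), Cardinal.mk ι ≤ κ ∧
        (∀ i, A i ∈ 𝒜 ∧ ν (A i) < ⊤) ∧ (⋃ i, A i) = Set.univ)
    (hc : ∀ (ι : Type u) (C : ι → Set Y), Cardinal.mk ι ≤ κ → (∀ i, C i ∈ 𝒞) →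
        (⋃ i, C i) ∈ 𝒜 ∧ (Set.univ \ ⋃ i, C i) ∈ 𝒜)
    (hd : ∀ A ∈ 𝒜, ν A = ⊤ → ∃ C ∈ 𝒞, C ⊆ A ∧ 0 < ν C ∧ ν C < ⊤) :
    ∃ D : Set (Set Y), D ⊆ 𝒞 ∧ (∀ C ∈ D, 0 < ν C) ∧
      D.Pairwise Disjoint ∧ κ < Cardinal.mk D := by
  obtain ⟨D, hD⟩ := exists_maximal_pairwise_subset {C | C ∈ 𝒞 ∧ 0 < ν C ∧ ν C < ⊤} Disjoint
  refine ⟨D, fun C hC => (hD.1.1 hC).1, fun C hC => (hD.1.1 hC).2.1, hD.1.2,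
    not_le.1 fun hDκ => hb ?_⟩
  have h𝒞 : ∀ C : D, (C : Set Y) ∈ 𝒞 := fun C => (hD.1.1 C.2).1
  have hB𝒜 : (univ \ ⋃₀ D) ∈ 𝒜 := sUnion_eq_iUnion ▸ (hc D Subtype.val hDκ h𝒞).2
  have hD𝒜 : ∀ C ∈ D, C ∈ 𝒜 := fun C hC => by
    have := hc PUnit (fun _ => C) (by simpa using Cardinal.one_le_aleph0.trans hκ)
      fun _ => (hD.1.1 hC).1
    rw [iUnion_const] at this
    exact this.1
  have hBfin : ν (univ \ ⋃₀ D) < ⊤ := by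
    refine lt_top_iff_ne_top.2 fun hBtop => ?_
    obtain ⟨C, hC𝒞, hCB, hCpos, hCfin⟩ := hd _ hB𝒜 hBtop
    have hCempty : C = ∅ := eq_empty_of_maximal_pairwiseDisjoint hD ⟨hC𝒞, hCpos, hCfin⟩
      (subset_compl_iff_disjoint_right.1 fun x hx => (hCB hx).2)
    simp [hCempty] at hCpos
  refine ⟨Option D, fun o => o.elim (univ \ ⋃₀ D) Subtype.val,
    Cardinal.mk_option_le hκ hDκ, ?_, ?_⟩
  · rintro (_ | ⟨C, hC⟩)
    · exact ⟨hB𝒜, hBfin⟩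
    · exact ⟨hD𝒜 C hC, (hD.1.1 hC).2.2⟩
  · simp [iUnion_option, ← sUnion_eq_biUnion]

/-- existence of many disjoint sets of positive measure. -/
theorem statement_2 {Y : Type u} (ν : MeasureTheory.OuterMeasure Y)
    (𝒞 𝒜 : Set (Set Y)) (κ : Cardinal.{u}) (hκ : Cardinal.aleph0 ≤ κ)
    (ha : Set.univ ∈ 𝒜)
    (hb : ¬ ∃ (ι : Type u) (A : ι → Set Y), Cardinal.mk ι ≤ κ ∧
        (∀ i, A i ∈ 𝒜 ∧ ν (A i) < ⊤) ∧ (⋃ i, A i) = Set.univ)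
    (hc : ∀ (ι : Type u) (C : ι → Set Y), Cardinal.mk ι ≤ κ → (∀ i, C i ∈ 𝒞) →
        (⋃ i, C i) ∈ 𝒜 ∧ (Set.univ \ ⋃ i, C i) ∈ 𝒜)
    (hd : ∀ A ∈ 𝒜, ν A = ⊤ → ∃ C ∈ 𝒞, C ⊆ A ∧ 0 < ν C ∧ ν C < ⊤) :
    ∃ D : Set (Set Y), D ⊆ 𝒞 ∧ (∀ C ∈ D, 0 < ν C) ∧
      D.Pairwise Disjoint ∧ κ < Cardinal.mk D :=
  statement_2_general ν 𝒞 𝒜 κ hκ hb hc hd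
end

section
/- Let κ ≥ ℵ₀ be a cardinal and let (Y, d) be a metric space that contains no dense subset of cardinality at most κ. Then there exists a family of pairwise disjoint closed subsets of Y, of cardinality strictly larger than κ, such that each set in the family has infinite H^h-measure for every Hausdorff function h. -/
open MeasureTheory Set Filter Topology
open scoped NNReal ENNReal

universe u v

/-! If no set of cardinality at most `κ` is dense, then some `ε`-separated set `S` has more than
`κ` points: otherwise the union of maximal `1/(n+1)`-separated sets would be such a dense set.
Cut `S` into `#S` disjoint pieces of cardinality `#S`. Each piece is `ε`-separated, hence closed,
and uncountable. A set of diameter at most `ε` meets it in at most one point, so it has no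
countable cover by such sets; its `H^h` approximation at scale `ε`, and hence `H^h` itself, is
infinite for every gauge `h`. -/

open Cardinal

namespace Metric

section PseudoEMetricSpace

variable {X : Type u} [PseudoEMetricSpace X] {ε : ℝ≥0∞} {s : Set X}

lemma exists_maximal_isSeparated (ε : ℝ≥0∞) (s : Set X) :
    ∃ N, Maximal (fun N ↦ N ⊆ s ∧ IsSeparated ε N) N := by
  refine zorn_subset _ fun c hcs hc ↦ ⟨⋃₀ c, ⟨sUnion_subset fun N hN ↦ (hcs hN).1, ?_⟩,
    fun N hN ↦ subset_sUnion_of_mem hN⟩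
  exact hc.pairwise_sUnion.2 fun N hN ↦ (hcs hN).2

lemma exists_isSeparated_lt_mk {κ : Cardinal.{u}}
    (hκ : ℵ₀ ≤ κ) (hdense : ∀ D : Set X, Dense D → κ < #D) :
    ∃ ε ≠ 0, ∃ S : Set X, IsSeparated ε S ∧ κ < #S := by
  by_contra! hsep
  choose N hN using fun n : ℕ ↦
    exists_maximal_isSeparated (((n + 1 : ℝ≥0)⁻¹ : ℝ≥0) : ℝ≥0∞) (univ : Set X)
  have hD : Dense (⋃ n, N n) := by
    refine fun x ↦ EMetric.mem_closure_iff.2 fun r hr ↦ ?_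
    obtain ⟨n, hn⟩ := ENNReal.exists_inv_nat_lt hr.ne'
    obtain ⟨y, hy, hxy⟩ := IsCover.of_maximal_isSeparated (hN n) (mem_univ x)
    refine ⟨y, mem_iUnion.2 ⟨n, hy⟩, lt_of_le_of_lt ?_ hn⟩
    calc edist x y ≤ (((n + 1 : ℝ≥0)⁻¹ : ℝ≥0) : ℝ≥0∞) := hxy
      _ ≤ (n : ℝ≥0∞)⁻¹ := by
        rw [ENNReal.coe_inv (by positivity)]
        exact ENNReal.inv_le_inv.2 (by norm_cast; simp)
  refine (hdense _ hD).not_ge (lift_le.{0}.1 ?_)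
  calc lift.{0} #(⋃ n, N n) ≤ lift.{u} #ℕ * ⨆ n, lift.{0} #(N n) := mk_iUnion_le_lift N
    _ ≤ lift.{0} κ * lift.{0} κ := by
        gcongr
        · simpa using hκ
        · exact ciSup_le' fun n ↦ lift_le.2 (hsep _ (by simp) _ (hN n).1.2)
    _ = lift.{0} κ := mul_eq_self (by simpa using hκ)

lemma IsSeparated.subsingleton_inter {t : Set X} (hs : IsSeparated ε s)
    (ht : ediam t ≤ ε) : (t ∩ s).Subsingleton := by
  intro x hx y hy
  by_contra hxy
  exact (hs hx.2 hy.2 hxy).not_ge ((edist_le_ediam_of_mem hx.1 hy.1).trans ht)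

lemma IsSeparated.countable_of_subset_iUnion (hs : IsSeparated ε s)
    {ι : Type*} [Countable ι] {t : ι → Set X} (hst : s ⊆ ⋃ i, t i) (ht : ∀ i, ediam (t i) ≤ ε) :
    s.Countable := by
  have hs_eq : s = ⋃ i, t i ∩ s := by
    rw [← iUnion_inter, inter_eq_right.2 hst]
  rw [hs_eq]
  exact countable_iUnion fun i ↦ (hs.subsingleton_inter (ht i)).countable

end PseudoEMetricSpace

section EMetricSpace

variable {X : Type u} [EMetricSpace X] {ε : ℝ≥0∞} {s : Set X}

lemma IsSeparated.isClosed (hs : IsSeparated ε s) (hε : ε ≠ 0) : IsClosed s :=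
  isClosed_of_spaced_out (edist_mem_uniformity (pos_iff_ne_zero.2 hε))
    fun _ hx _ hy hxy ↦ (hs hx hy hxy).not_gt

lemma IsSeparated.mkMetric_eq_top (hs : IsSeparated ε s) (hε : ε ≠ 0)
    (hunc : ¬ s.Countable) (m : ℝ≥0∞ → ℝ≥0∞) : OuterMeasure.mkMetric m s = ⊤ := by
  have hpre : OuterMeasure.mkMetric'.pre (fun t ↦ m (ediam t)) ε s = ⊤ := by
    rw [OuterMeasure.mkMetric'.pre, OuterMeasure.boundedBy_apply, iInf₂_eq_top]
    intro t hst
    obtain ⟨i, hi⟩ : ∃ i, ε < ediam (t i) := by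
      by_contra! h
      exact hunc (hs.countable_of_subset_iUnion hst h)
    have hne : (t i).Nonempty := nonempty_iff_ne_empty.2 fun h ↦ by simp [h] at hi
    refine ENNReal.tsum_eq_top_of_eq_top ⟨i, ?_⟩
    rw [iSup_pos hne]
    exact extend_eq_top (P := fun t ↦ ediam t ≤ ε) _ hi.not_ge
  exact eq_top_mono ((OuterMeasure.le_mkMetric m _ ε (pos_iff_ne_zero.2 hε)
    fun t ht ↦ OuterMeasure.mkMetric'.pre_le ht) s) hpre

end EMetricSpace

end Metric

lemma Set.Infinite.exists_pairwise_disjoint_subsets_mk_eq {α : Type u} {S : Set α}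
    (hS : S.Infinite) :
    ∃ 𝒟 : Set (Set α), #𝒟 = #S ∧ 𝒟.Pairwise Disjoint ∧ ∀ C ∈ 𝒟, C ⊆ S ∧ #C = #S := by
  have : Infinite S := hS.to_subtype
  obtain ⟨e⟩ : Nonempty (S × S ≃ S) :=
    Cardinal.eq.1 (by rw [mk_prod, lift_id, mul_eq_self (aleph0_le_mk S)])
  let g : S → S → α := fun a b ↦ e (a, b)
  have hg : ∀ {a b a' b'}, g a b = g a' b' → a = a' ∧ b = b' := fun h ↦
    Prod.ext_iff.1 (e.injective (Subtype.val_injective h))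
  let F : S → Set α := fun a ↦ range (g a)
  have hF : Function.Injective F := fun a a' h ↦ by
    obtain ⟨b', hb'⟩ : g a (Classical.arbitrary S) ∈ F a' := h ▸ mem_range_self _
    exact (hg hb').1.symm
  refine ⟨range F, mk_range_eq F hF, ?_, ?_⟩
  · rintro _ ⟨a, rfl⟩ _ ⟨a', rfl⟩ hne
    refine disjoint_left.2 ?_
    rintro _ ⟨b, rfl⟩ ⟨b', hb'⟩
    exact hne (congrArg F (hg hb').1.symm)
  · rintro _ ⟨a, rfl⟩
    exact ⟨range_subset_iff.2 fun b ↦ (e (a, b)).2, mk_range_eq _ fun b b' h ↦ (hg h).2⟩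

/-- Lemma `notSeparable`. -/
theorem statement_10 {Y : Type u} [MetricSpace Y] (κ : Cardinal.{u})
    (hκ : Cardinal.aleph0 ≤ κ)
    (hdense : ∀ D : Set Y, Dense D → κ < Cardinal.mk D) :
    ∃ 𝒟 : Set (Set Y), κ < Cardinal.mk 𝒟 ∧ 𝒟.Pairwise Disjoint ∧
      ∀ C ∈ 𝒟, IsClosed C ∧
        ∀ h : ℝ≥0 → ℝ≥0∞, IsHausdorffFunction h → hausdorffM h C = ⊤ := by
  obtain ⟨ε, hε, S, hS, hκS⟩ := Metric.exists_isSeparated_lt_mk hκ hdense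
  have hS_inf : S.Infinite := infinite_coe_iff.1 (infinite_iff.2 (hκ.trans hκS.le))
  obtain ⟨𝒟, h𝒟, hdisj, hsub⟩ := hS_inf.exists_pairwise_disjoint_subsets_mk_eq
  refine ⟨𝒟, h𝒟 ▸ hκS, hdisj, fun C hC ↦ ?_⟩
  obtain ⟨hCS, hCS_mk⟩ := hsub C hC
  have hC_sep : Metric.IsSeparated ε C := hS.subset hCS
  have hC_unc : ¬ C.Countable := by
    rw [← le_aleph0_iff_set_countable, hCS_mk]
    exact (hκ.trans_lt hκS).not_ge
  exact ⟨hC_sep.isClosed hε, fun h _ ↦ hC_sep.mkMetric_eq_top hε hC_unc _⟩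
end

section
/- Assume the Continuum Hypothesis (2^ℵ₀ = ℵ₁). Let (X, d, H^h) be a compact metric space satisfying property (H∞). Then there exists a set G ⊆ X such that: (a) the cardinality of G is 2^ℵ₀; (b) every subset E ⊆ G that is σ-finite with respect to H^h is countable; (c) G is not σ-finite with respect to H^h; (d) every subset of G is H^h-measurable. -/
open MeasureTheory Set Filter Topology
open scoped NNReal ENNReal

universe u v

/-!
Under CH there are at most `ℵ₁` Borel sets of finite `H^h`-measure; index them by `ω₁`. Since
points are `H^h`-null and `X` is not σ-finite, countably many of them never cover `X` up to a
countable set, so a transfinite recursion picks distinct points `xᵢ` with `xᵢ` outside the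
sets of index `≤ i`. Then `G = {xᵢ}` meets each Borel set of finite measure in a countable set.
Every σ-finite set, and every set of finite measure, has a Borel hull of finite measure; hence
σ-finite subsets of `G` are countable, and every `A ⊆ G` meets each set of finite measure in a
null set, which makes `A` Carathéodory-measurable.
-/

open Cardinal Function

theorem exists_injective_countable_inter_of_not_countable_compl {ι X : Type*} [LinearOrder ι]
    [WellFoundedLT ι] (hι : ∀ i : ι, (Iic i).Countable) (A : ι → Set X)
    (hA : ∀ i, ¬ (⋃ j ≤ i, A j)ᶜ.Countable) :
    ∃ x : ι → X, Injective x ∧ ∀ i, (range x ∩ A i).Countable := by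
  have step : ∀ i (prev : ∀ j < i, X),
      ∃ y ∈ (⋃ j ≤ i, A j)ᶜ, ∀ j (hj : j < i), prev j hj ≠ y := by
    intro i prev
    have : Countable (Iio i) := ((hι i).mono Iio_subset_Iic_self).to_subtype
    obtain ⟨y, hy, hy_new⟩ := not_subset.1 fun hsub =>
      hA i ((countable_range fun j : Iio i => prev j j.2).mono hsub)
    exact ⟨y, hy, fun j hj hjy => hy_new ⟨⟨j, hj⟩, hjy⟩⟩
  choose f hf_compl hf_new using step
  set x : ι → X := wellFounded_lt.fix f
  have hx : ∀ i, x i ∉ ⋃ j ≤ i, A j ∧ ∀ j < i, x j ≠ x i := by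
    intro i
    rw [show x i = f i fun j _ => x j from wellFounded_lt.fix_eq f i]
    exact ⟨hf_compl i _, hf_new i _⟩
  refine ⟨x, Injective.of_lt_imp_ne fun j i hji => (hx i).2 j hji, fun i => ?_⟩
  refine ((hι i).image x).mono ?_
  rintro _ ⟨⟨j, rfl⟩, hj⟩
  exact ⟨j, not_lt.1 fun hij => (hx j).1 (mem_iUnion₂.2 ⟨i, hij.le, hj⟩), rfl⟩

theorem countable_Iic_aleph_one_toType (i : (ℵ₁ : Cardinal.{u}).ord.ToType) :
    (Iic i).Countable := by
  rw [← Iio_union_right]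
  refine Countable.union ?_ (countable_singleton i)
  exact le_aleph0_iff_set_countable.1 (lt_aleph_one_iff.1 (by simpa using mk_Iio_lt i))

theorem sigmaFiniteSet_sUnion {Z : Type*} (μ : OuterMeasure Z) {𝒞 : Set (Set Z)}
    (h𝒞 : 𝒞.Countable) (h : ∀ s ∈ 𝒞, μ.IsCaratheodory s ∧ μ s < ⊤) :
    SigmaFiniteSet μ (⋃₀ 𝒞) := by
  obtain ⟨A, hA⟩ := (h𝒞.insert ∅).exists_eq_range (insert_nonempty _ _)
  refine ⟨A, fun n => ?_, by rw [← sUnion_range, ← hA, sUnion_insert, empty_union]⟩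
  rcases (hA ▸ mem_range_self n : A n ∈ insert ∅ 𝒞) with hn | hn
  · simp [hn, OuterMeasure.isCaratheodory_empty]
  · exact h _ hn

theorem OuterMeasure.isCaratheodory_of_forall_inter_null {Z : Type*} (μ : OuterMeasure Z)
    {A : Set Z} (h : ∀ t, μ t < ⊤ → μ (t ∩ A) = 0) : μ.IsCaratheodory A := by
  refine (OuterMeasure.isCaratheodory_iff_le' μ).2 fun t => ?_
  rcases eq_top_or_lt_top (μ t) with ht | ht
  · exact ht ▸ le_top
  · rw [h t ht, zero_add]
    exact measure_mono sdiff_subset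

section Measure

variable {X : Type u} [MeasurableSpace X] (ν : Measure X)

theorem SigmaFiniteSet.exists_subset_iUnion_measurable {E : Set X}
    (hE : SigmaFiniteSet ν.toOuterMeasure E) :
    ∃ B : ℕ → Set X, (∀ n, MeasurableSet (B n) ∧ ν (B n) < ⊤) ∧ E ⊆ ⋃ n, B n := by
  obtain ⟨A, hA, rfl⟩ := hE
  refine ⟨fun n => toMeasurable ν (A n), fun n => ⟨measurableSet_toMeasurable ν _, ?_⟩,
    iUnion_mono fun n => subset_toMeasurable ν _⟩
  rw [measure_toMeasurable]
  exact (hA n).2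

theorem not_countable_compl_biUnion_of_not_sigmaFiniteSet [MeasurableSingletonClass X]
    [NullSingletonClass ν] (hX : ¬ SigmaFiniteSet ν.toOuterMeasure Set.univ) {ι : Type*}
    {I : Set ι} (hI : I.Countable) {A : ι → Set X} (hA : ∀ i ∈ I, MeasurableSet (A i) ∧ ν (A i) < ⊤) :
    ¬ (⋃ i ∈ I, A i)ᶜ.Countable := by
  intro hC
  apply hX
  have hcover : Set.univ = ⋃₀ insert (⋃ i ∈ I, A i)ᶜ (A '' I) := by
    rw [sUnion_insert, sUnion_image, compl_union_self]
  rw [hcover]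
  refine sigmaFiniteSet_sUnion _ ((hI.image A).insert _) ?_
  rintro s (rfl | ⟨i, hi, rfl⟩)
  · exact ⟨le_toOuterMeasure_caratheodory ν _ hC.measurableSet,
      (hC.measure_zero ν).trans_lt ENNReal.zero_lt_top⟩
  · exact ⟨le_toOuterMeasure_caratheodory ν _ (hA i hi).1, (hA i hi).2⟩

theorem exists_mk_eq_aleph_one_forall_countable_inter [MeasurableSingletonClass X]
    [NullSingletonClass ν] (hcard : #{s : Set X | MeasurableSet s} ≤ ℵ₁)
    (hX : ¬ SigmaFiniteSet ν.toOuterMeasure Set.univ) :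
    ∃ G : Set X, #G = ℵ₁ ∧ ∀ s, MeasurableSet s → ν s < ⊤ → (G ∩ s).Countable := by
  set 𝓕 : Set (Set X) := {s | MeasurableSet s ∧ ν s < ⊤}
  have h𝓕 : #𝓕 ≤ #(ℵ₁ : Cardinal.{u}).ord.ToType := by
    rw [mk_ord_toType]
    exact (mk_le_mk_of_subset fun s hs => hs.1).trans hcard
  have : Nonempty 𝓕 := ⟨⟨∅, MeasurableSet.empty, by simp⟩⟩
  obtain ⟨g⟩ := h𝓕
  set A : (ℵ₁ : Cardinal.{u}).ord.ToType → Set X := fun i => (invFun g i : 𝓕)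
  have hA : ∀ i, MeasurableSet (A i) ∧ ν (A i) < ⊤ := fun i => (invFun g i).2
  obtain ⟨x, hx_inj, hx⟩ := exists_injective_countable_inter_of_not_countable_compl
    countable_Iic_aleph_one_toType A fun i =>
      not_countable_compl_biUnion_of_not_sigmaFiniteSet ν hX (countable_Iic_aleph_one_toType i)
        fun j _ => hA j
  refine ⟨range x, by rw [mk_range_eq x hx_inj, mk_ord_toType], fun s hs hνs => ?_⟩
  obtain ⟨i, hi⟩ := invFun_surjective g.injective ⟨s, hs, hνs⟩
  have his : A i = s := congrArg Subtype.val hi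
  exact his ▸ hx i

variable {ν} {G : Set X}

theorem SigmaFiniteSet.countable_of_subset
    (hG : ∀ s, MeasurableSet s → ν s < ⊤ → (G ∩ s).Countable) {E : Set X}
    (hE : SigmaFiniteSet ν.toOuterMeasure E) (hEG : E ⊆ G) : E.Countable := by
  obtain ⟨B, hB, hEB⟩ := hE.exists_subset_iUnion_measurable
  refine (countable_iUnion fun n => hG (B n) (hB n).1 (hB n).2).mono fun y hy => ?_
  obtain ⟨n, hn⟩ := mem_iUnion.1 (hEB hy)
  exact mem_iUnion.2 ⟨n, hEG hy, hn⟩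

theorem isCaratheodory_of_subset [NullSingletonClass ν]
    (hG : ∀ s, MeasurableSet s → ν s < ⊤ → (G ∩ s).Countable) {A : Set X} (hAG : A ⊆ G) :
    ν.toOuterMeasure.IsCaratheodory A := by
  refine OuterMeasure.isCaratheodory_of_forall_inter_null _ fun t ht => ?_
  have hB := hG (toMeasurable ν t) (measurableSet_toMeasurable ν t) (by
    rwa [measure_toMeasurable])
  refine measure_mono_null (fun y hy => ?_) (hB.measure_zero ν)
  exact ⟨hAG hy.2, subset_toMeasurable ν t hy.1⟩

end Measure

theorem nullSingletonClass_mkMetric {X : Type*} [EMetricSpace X] [MeasurableSpace X]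
    [BorelSpace X] {m : ℝ≥0∞ → ℝ≥0∞} (hm : m 0 = 0) :
    NullSingletonClass (Measure.mkMetric m : Measure X) := by
  refine ⟨fun x => le_antisymm ?_ zero_le⟩
  rw [Measure.mkMetric_apply]
  refine iSup₂_le fun ε _ => iInf₂_le_of_le (fun _ => {x}) ?_ <| iInf_le_of_le (fun _ => ?_) ?_
  · exact subset_iUnion (fun _ => {x} : ℕ → Set X) 0
  · simp only [Metric.ediam_singleton, zero_le]
  · simp [hm]

theorem cardinal_measurableSet_le_continuum_of_countablyGenerated {X : Type u}
    [MeasurableSpace X] [MeasurableSpace.CountablyGenerated X] :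
    #{s : Set X | MeasurableSet s} ≤ 𝔠 := by
  obtain ⟨b, hb, hgen⟩ := MeasurableSpace.CountablyGenerated.isCountablyGenerated (α := X)
  have := MeasurableSpace.cardinal_measurableSet_le_continuum
    (hb.le_aleph0.trans aleph0_le_continuum)
  rwa [← hgen] at this

theorem statement_17_general {X : Type u} [MetricSpace X]
    (CH : (2 : Cardinal.{u}) ^ Cardinal.aleph0 = Cardinal.aleph 1)
    (h : ℝ≥0 → ℝ≥0∞) (hH : PropertyHInf (Set.univ : Set X) h) :
    ∃ G : Set X,
      Cardinal.mk G = 2 ^ Cardinal.aleph0 ∧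
      (∀ E, E ⊆ G → SigmaFiniteSet (hausdorffM h) E → E.Countable) ∧
      ¬ SigmaFiniteSet (hausdorffM h) G ∧
      (∀ A, A ⊆ G → (hausdorffM h).IsCaratheodory A) := by
  obtain ⟨hPH, hX⟩ := hH
  have := hPH.separable
  borelize X
  set ν : Measure X := Measure.mkMetric fun d => h d.toNNReal
  have hμ : hausdorffM h = ν.toOuterMeasure := (Measure.mkMetric_toOuterMeasure _).symm
  have : NullSingletonClass ν := nullSingletonClass_mkMetric (by simpa using hPH.zero)
  have hcard : #{s : Set X | MeasurableSet s} ≤ ℵ₁ := by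
    rw [← CH, two_power_aleph0]
    exact cardinal_measurableSet_le_continuum_of_countablyGenerated
  rw [hμ] at hX ⊢
  obtain ⟨G, hGcard, hG⟩ := exists_mk_eq_aleph_one_forall_countable_inter ν hcard hX
  refine ⟨G, CH ▸ hGcard, fun E hEG hE => hE.countable_of_subset hG hEG, fun hσ => ?_,
    fun A hAG => isCaratheodory_of_subset hG hAG⟩
  exact (lt_aleph_one_iff.2 (le_aleph0_iff_set_countable.2
    (hσ.countable_of_subset hG subset_rfl))).ne hGcard

/-- Proposition `BesicovitchMartin`, assumes CH. -/
theorem statement_17 {X : Type u} [MetricSpace X] [CompactSpace X]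
    (CH : (2 : Cardinal.{u}) ^ Cardinal.aleph0 = Cardinal.aleph 1)
    (h : ℝ≥0 → ℝ≥0∞) (hH : PropertyHInf (Set.univ : Set X) h) :
    ∃ G : Set X,
      Cardinal.mk G = 2 ^ Cardinal.aleph0 ∧
      (∀ E, E ⊆ G → SigmaFiniteSet (hausdorffM h) E → E.Countable) ∧
      ¬ SigmaFiniteSet (hausdorffM h) G ∧
      (∀ A, A ⊆ G → (hausdorffM h).IsCaratheodory A) :=
  statement_17_general CH h hH
end

section
/- Assume the Continuum Hypothesis (2^ℵ₀ = ℵ₁). Let (X, d, H^h) be a compact metric space satisfying property (H∞). Let (Y, ν) be a measure space with |Y| = 2^ℵ₀ such that every singleton in Y has ν-measure zero. Then there exists a surjection f : X → Y such that f⁻¹(S) is H^h-measurable for every S ⊆ Y, and such that whenever N ⊆ X is σ-finite with respect to H^h, one has ν(f(N)) = 0. -/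
open MeasureTheory Set Filter Topology
open scoped NNReal ENNReal

universe u v

/-!
Under CH the Borel sets of finite `H^h`-measure can be listed as `(M o)_{o < ω₁}`. Sending a point
`x` to the first stage `o` with `x ∈ M o` gives a map `X → ω₁` all of whose preimages are
measurable: a set of finite measure lies inside some `M β`, where the map only takes the countably
many values `≤ β`, and each fibre is `M o` minus a countable union of earlier `M p`. For the same
reason σ-finite sets have countable image, whereas the image of `X` is uncountable because `X` is
not σ-finite. So the image has size `ℵ₁ = |Y|`, and composing with a surjection onto `Y` gives `f`.
-/

open Cardinal Ordinal Function

lemma countable_Iio_of_lt_omega_one {o : Ordinal.{u}} (ho : o < ω₁) : (Iio o).Countable := by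
  rw [← le_aleph0_iff_set_countable, Cardinal.mk_Iio_ordinal, ← lift_aleph0.{u + 1, u},
    Cardinal.lift_le, ← Order.lt_succ_iff, succ_aleph0, ← lt_omega_iff_card_lt]
  exact ho

lemma countable_Iic_of_lt_omega_one {o : Ordinal.{u}} (ho : o < ω₁) : (Iic o).Countable := by
  rw [← Iio_insert]
  exact (countable_Iio_of_lt_omega_one ho).insert o

lemma exists_enumeration_of_mk_le_aleph_one {α : Type u} {s : Set α} (hs : #s ≤ ℵ₁)
    (hne : s.Nonempty) :
    ∃ M : Ordinal.{u} → α, (∀ o, M o ∈ s) ∧ ∀ a ∈ s, ∃ o < ω₁, M o = a := by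
  have : Nonempty s := hne.to_subtype
  obtain ⟨e⟩ : Nonempty (s ↪ Iio (ω₁ : Ordinal.{u})) := by
    rw [← lift_mk_le', Cardinal.mk_Iio_ordinal, card_omega, Cardinal.lift_lift]
    exact Cardinal.lift_le.2 hs
  have he : Injective (Subtype.val ∘ e) := Subtype.val_injective.comp e.injective
  refine ⟨fun o => (invFun (Subtype.val ∘ e) o : s), fun o => Subtype.prop _,
    fun a ha => ⟨e ⟨a, ha⟩, (e ⟨a, ha⟩).2, ?_⟩⟩
  exact congrArg Subtype.val (leftInverse_invFun he ⟨a, ha⟩)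

lemma mk_measurableSet_le_continuum {α : Type u} [MeasurableSpace α]
    [MeasurableSpace.CountablyGenerated α] : #{s : Set α | MeasurableSet s} ≤ 𝔠 := by
  obtain ⟨b, hb, hgen⟩ := MeasurableSpace.CountablyGenerated.isCountablyGenerated (α := α)
  rw [hgen]
  exact MeasurableSpace.cardinal_measurableSet_le_continuum
    (hb.le_aleph0.trans aleph0_le_continuum)

lemma sigmaFiniteSet_biUnion {Z ι : Type*} {μ : OuterMeasure Z} {s : Set ι} (hs : s.Countable)
    {A : ι → Set Z} (hA : ∀ i ∈ s, μ.IsCaratheodory (A i) ∧ μ (A i) < ⊤) :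
    SigmaFiniteSet μ (⋃ i ∈ s, A i) := by
  rcases s.eq_empty_or_nonempty with rfl | hne
  · exact ⟨fun _ => ∅, fun _ => ⟨μ.isCaratheodory_empty, by simp⟩, by simp⟩
  · obtain ⟨φ, rfl⟩ := hs.exists_eq_range hne
    exact ⟨A ∘ φ, fun n => hA _ (mem_range_self n), biUnion_range⟩

section Hausdorff

variable {Z : Type*} [EMetricSpace Z] (h : ℝ≥0 → ℝ≥0∞)

lemma isCaratheodory_hausdorffM [MeasurableSpace Z] [BorelSpace Z] {s : Set Z}
    (hs : MeasurableSet s) : (hausdorffM h).IsCaratheodory s :=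
  (OuterMeasure.mkMetric'_isMetric _).borel_le_caratheodory s
    (by rwa [← BorelSpace.measurable_eq])

lemma exists_measurableSet_superset_hausdorffM_eq [MeasurableSpace Z] [BorelSpace Z]
    (s : Set Z) : ∃ t, s ⊆ t ∧ MeasurableSet t ∧ hausdorffM h t = hausdorffM h s := by
  obtain ⟨t, hst, ht, hμ⟩ :=
    (hausdorffM h : OuterMeasure Z).exists_measurable_superset_eq_trim s
  exact ⟨t, hst, ht, by rw [hμ, hausdorffM, OuterMeasure.trim_mkMetric]⟩

lemma hausdorffM_singleton {h : ℝ≥0 → ℝ≥0∞} (h0 : h 0 = 0) (x : Z) :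
    hausdorffM h ({x} : Set Z) = 0 := by
  refine le_antisymm ?_ bot_le
  calc hausdorffM h ({x} : Set Z)
      ≤ h (Metric.ediam ({x} : Set Z)).toNNReal := by
        show OuterMeasure.mkMetric' (fun s => h (Metric.ediam s).toNNReal) {x} ≤ _
        simp only [OuterMeasure.mkMetric', OuterMeasure.iSup_apply]
        exact iSup₂_le fun r _ => OuterMeasure.mkMetric'.pre_le (by simp)
    _ = 0 := by simp [h0]

end Hausdorff

section EntryStage

variable {X : Type u}

structure IsFiniteMeasureExhaustion (μ : OuterMeasure X) (M : Ordinal.{u} → Set X) : Prop where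
  isCaratheodory : ∀ o, μ.IsCaratheodory (M o)
  lt_top : ∀ o, μ (M o) < ⊤
  exists_subset : ∀ t, μ t < ⊤ → ∃ o < ω₁, t ⊆ M o
  exists_mem : ∀ x, ∃ o, x ∈ M o

lemma exists_isFiniteMeasureExhaustion [MeasurableSpace X] (μ : OuterMeasure X)
    (hcard : #{s : Set X | MeasurableSet s} ≤ ℵ₁)
    (hcarath : ∀ s, MeasurableSet s → μ.IsCaratheodory s)
    (hhull : ∀ t, ∃ s, t ⊆ s ∧ MeasurableSet s ∧ μ s = μ t)
    (hpt : ∀ x, μ ({x} : Set X) < ⊤) :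
    ∃ M, IsFiniteMeasureExhaustion μ M := by
  obtain ⟨M, hMB, hBM⟩ := exists_enumeration_of_mk_le_aleph_one
    (s := {s : Set X | MeasurableSet s ∧ μ s < ⊤})
    ((mk_le_mk_of_subset fun s hs => hs.1).trans hcard) ⟨∅, MeasurableSet.empty, by simp⟩
  have exists_subset : ∀ t, μ t < ⊤ → ∃ o < ω₁, t ⊆ M o := fun t ht => by
    obtain ⟨s, hts, hs, hμ⟩ := hhull t
    obtain ⟨o, ho, rfl⟩ := hBM s ⟨hs, hμ ▸ ht⟩
    exact ⟨o, ho, hts⟩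
  refine ⟨M, fun o => hcarath _ (hMB o).1, fun o => (hMB o).2, exists_subset, fun x => ?_⟩
  obtain ⟨o, -, hx⟩ := exists_subset {x} (hpt x)
  exact ⟨o, hx rfl⟩

noncomputable def entryStage (M : Ordinal.{u} → Set X) (x : X) : Ordinal.{u} :=
  sInf {o | x ∈ M o}

variable {μ : OuterMeasure X} {M : Ordinal.{u} → Set X}

lemma entryStage_le {x : X} {o : Ordinal.{u}} (hx : x ∈ M o) : entryStage M x ≤ o :=
  csInf_le' hx

namespace IsFiniteMeasureExhaustion

lemma mem_entryStage (hM : IsFiniteMeasureExhaustion μ M) (x : X) : x ∈ M (entryStage M x) :=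
  csInf_mem (hM.exists_mem x)

lemma entryStage_preimage_singleton (hM : IsFiniteMeasureExhaustion μ M) (o : Ordinal.{u}) :
    entryStage M ⁻¹' {o} = M o \ ⋃ p ∈ Iio o, M p := by
  ext x
  simp only [mem_preimage, mem_singleton_iff, Set.mem_sdiff, mem_iUnion, mem_Iio, not_exists]
  constructor
  · rintro rfl
    exact ⟨hM.mem_entryStage x, fun p hp hx => (entryStage_le hx).not_gt hp⟩
  · rintro ⟨hx, hlt⟩
    exact (entryStage_le hx).antisymm (not_lt.1 fun h => hlt _ h (hM.mem_entryStage x))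

lemma isCaratheodory_entryStage_preimage_singleton (hM : IsFiniteMeasureExhaustion μ M)
    {o : Ordinal.{u}} (ho : o < ω₁) : μ.IsCaratheodory (entryStage M ⁻¹' {o}) := by
  rw [hM.entryStage_preimage_singleton]
  exact μ.isCaratheodory_sdiff (hM.isCaratheodory o)
    (MeasurableSet.biUnion (m := μ.caratheodory) (countable_Iio_of_lt_omega_one ho)
      fun p _ => hM.isCaratheodory p)

lemma isCaratheodory_entryStage_preimage (hM : IsFiniteMeasureExhaustion μ M)
    (T : Set Ordinal.{u}) : μ.IsCaratheodory (entryStage M ⁻¹' T) := by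
  refine (μ.isCaratheodory_iff_le').2 fun t => ?_
  rcases (le_top : μ t ≤ ⊤).lt_or_eq with ht | ht
  swap
  · simp [ht]
  obtain ⟨β, hβ, htβ⟩ := hM.exists_subset t ht
  -- On `t ⊆ M β` the entry stage is at most `β`, so only the countably many fibres over
  -- `T ∩ Iic β` meet `t`.
  have hA : μ.IsCaratheodory (entryStage M ⁻¹' (T ∩ Iic β)) := by
    rw [← biUnion_preimage_singleton]
    exact MeasurableSet.biUnion (m := μ.caratheodory)
      ((countable_Iic_of_lt_omega_one hβ).mono inter_subset_right)
      fun o ho => hM.isCaratheodory_entryStage_preimage_singleton (ho.2.trans_lt hβ)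
  have hmem : ∀ x ∈ t,
      x ∈ entryStage M ⁻¹' T ↔ x ∈ entryStage M ⁻¹' (T ∩ Iic β) :=
    fun x hx => by simp [entryStage_le (htβ hx)]
  have hinter : t ∩ entryStage M ⁻¹' T = t ∩ entryStage M ⁻¹' (T ∩ Iic β) :=
    ext fun x => and_congr_right (hmem x)
  have hdiff : t \ entryStage M ⁻¹' T = t \ entryStage M ⁻¹' (T ∩ Iic β) :=
    ext fun x => and_congr_right fun hx => not_congr (hmem x hx)
  rw [hinter, hdiff, ← hA t]

lemma countable_entryStage_image (hM : IsFiniteMeasureExhaustion μ M) {N : Set X}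
    (hN : SigmaFiniteSet μ N) : (entryStage M '' N).Countable := by
  obtain ⟨A, hA, rfl⟩ := hN
  choose β hβ hAβ using fun n => hM.exists_subset (A n) (hA n).2
  refine (countable_Iic_of_lt_omega_one (iSup_lt_omega_one hβ)).mono ?_
  rintro _ ⟨x, hx, rfl⟩
  obtain ⟨n, hxn⟩ := mem_iUnion.1 hx
  exact (entryStage_le (hAβ n hxn)).trans (Ordinal.le_iSup β n)

lemma not_countable_range_entryStage (hM : IsFiniteMeasureExhaustion μ M)
    (hX : ¬ SigmaFiniteSet μ Set.univ) : ¬ (range (entryStage M)).Countable := fun hc => by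
  have hcover : ⋃ o ∈ range (entryStage M), M o = Set.univ :=
    eq_univ_of_forall fun x => mem_biUnion (mem_range_self x) (hM.mem_entryStage x)
  exact hX (hcover ▸ sigmaFiniteSet_biUnion hc fun o _ => ⟨hM.isCaratheodory o, hM.lt_top o⟩)

end IsFiniteMeasureExhaustion

end EntryStage

theorem statement_18_general {X : Type u} [MetricSpace X] {Y : Type u}
    (CH : (2 : Cardinal.{u}) ^ Cardinal.aleph0 = Cardinal.aleph 1)
    (h : ℝ≥0 → ℝ≥0∞) (hH : PropertyHInf (Set.univ : Set X) h)
    (ν : MeasureTheory.OuterMeasure Y)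
    (hY : Cardinal.mk Y = 2 ^ Cardinal.aleph0)
    (hatoms : ∀ y : Y, ν {y} = 0) :
    ∃ f : X → Y, Function.Surjective f ∧
      (∀ S : Set Y, (hausdorffM h).IsCaratheodory (f ⁻¹' S)) ∧
      ∀ N : Set X, SigmaFiniteSet (hausdorffM h) N → ν (f '' N) = 0 := by
  obtain ⟨⟨-, hsep, -, -, -, h0, -⟩, hnsf⟩ := hH
  have := UniformSpace.secondCountable_of_separable X
  borelize X
  obtain ⟨M, hM⟩ := exists_isFiniteMeasureExhaustion (hausdorffM h : OuterMeasure X)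
    (by rw [← CH, two_power_aleph0]; exact mk_measurableSet_le_continuum)
    (fun _ => isCaratheodory_hausdorffM h)
    (exists_measurableSet_superset_hausdorffM_eq h) (by simp [hausdorffM_singleton h0])
  have : Nonempty Y := mk_ne_zero_iff.1 (by simp [hY, continuum_ne_zero])
  obtain ⟨e⟩ : Nonempty (Y ↪ range (entryStage M)) := by
    have hunc := hM.not_countable_range_entryStage hnsf
    rw [← le_aleph0_iff_set_countable, not_le, ← Order.succ_le_iff, succ_aleph0] at hunc
    rw [← lift_mk_le', hY, CH]
    simpa using hunc
  have he : Injective (Subtype.val ∘ e) := Subtype.val_injective.comp e.injective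
  refine ⟨invFun (Subtype.val ∘ e) ∘ entryStage M, fun y => ?_,
    fun S => hM.isCaratheodory_entryStage_preimage (invFun (Subtype.val ∘ e) ⁻¹' S),
    fun N hN => ?_⟩
  · obtain ⟨x, hx⟩ := (e y).2
    exact ⟨x, by rw [comp_apply, hx]; exact leftInverse_invFun he y⟩
  · rw [image_comp, ← biUnion_of_singleton (_ '' _)]
    exact (measure_biUnion_null_iff ((hM.countable_entryStage_image hN).image _)).2
      fun y _ => hatoms y

/-- Theorem `BesiSF`, assumes CH. -/
theorem statement_18 {X : Type u} [MetricSpace X] [CompactSpace X] {Y : Type u}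
    (CH : (2 : Cardinal.{u}) ^ Cardinal.aleph0 = Cardinal.aleph 1)
    (h : ℝ≥0 → ℝ≥0∞) (hH : PropertyHInf (Set.univ : Set X) h)
    (ν : MeasureTheory.OuterMeasure Y)
    (hY : Cardinal.mk Y = 2 ^ Cardinal.aleph0)
    (hatoms : ∀ y : Y, ν {y} = 0) :
    ∃ f : X → Y, Function.Surjective f ∧
      (∀ S : Set Y, (hausdorffM h).IsCaratheodory (f ⁻¹' S)) ∧
      ∀ N : Set X, SigmaFiniteSet (hausdorffM h) N → ν (f '' N) = 0 :=
  statement_18_general CH h hH ν hY hatoms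
end
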